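/- Assume: (i) for every a ∈ (0,1] there exist an N-node strategy ν_a with PA_N(ν_a) ≥ a and MSE_N(ν_a) = c_η^N(a), and a 2-node strategy κ_a with PA_2(κ_a) ≥ a and MSE_2(κ_a) = c_η^2(a); (ii) best responses exist in both games. Then sInf { Q_DC(MSE_N(ν), PA_N(ν)) : ν a best response among N-node strategies } = sInf { Q_DC(MSE_2(κ), PA_2(κ)) : κ a best response among 2-node strategies }: the data collector's guaranteed utility at equilibrium does not decrease as the number of adversarial nodes grows. -/

import Mathlib

open MeasureTheory ProbabilityTheory

noncomputable section

def midN (N : ℕ) (p : ℝ × (Fin (N-1) → ℝ)) : ℝ :=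
  (max p.1 (⨆ i, p.2 i) + min p.1 (⨅ i, p.2 i)) / 2

def accN (N : ℕ) (η Δ : ℝ) : Set (ℝ × (Fin (N-1) → ℝ)) :=
  {p | max p.1 (⨆ i, p.2 i) - min p.1 (⨅ i, p.2 i) ≤ η * Δ}

def PA_N (N : ℕ) (η Δ : ℝ) (μ : Measure ℝ) (ν : Measure (Fin (N-1) → ℝ)) : ℝ :=
  ((μ.prod ν) (accN N η Δ)).toReal

def MSE_N (N : ℕ) (η Δ : ℝ) (μ : Measure ℝ) (ν : Measure (Fin (N-1) → ℝ)) : ℝ :=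
  ∫ p, (midN N p) ^ 2 ∂((μ.prod ν)[|accN N η Δ])

def mid2 (p : ℝ × ℝ) : ℝ := (max p.1 p.2 + min p.1 p.2) / 2

def acc2 (η Δ : ℝ) : Set (ℝ × ℝ) := {p | max p.1 p.2 - min p.1 p.2 ≤ η * Δ}

def PA_2 (η Δ : ℝ) (μ κ : Measure ℝ) : ℝ := ((μ.prod κ) (acc2 η Δ)).toReal

def MSE_2 (η Δ : ℝ) (μ κ : Measure ℝ) : ℝ :=
  ∫ p, (mid2 p) ^ 2 ∂((μ.prod κ)[|acc2 η Δ])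

def cN (N : ℕ) (η Δ : ℝ) (μ : Measure ℝ) (α : ℝ) : ℝ :=
  sSup {r | ∃ ν : Measure (Fin (N-1) → ℝ), IsProbabilityMeasure ν ∧
    α ≤ PA_N N η Δ μ ν ∧ r = MSE_N N η Δ μ ν}

def c2 (η Δ : ℝ) (μ : Measure ℝ) (α : ℝ) : ℝ :=
  sSup {r | ∃ κ : Measure ℝ, IsProbabilityMeasure κ ∧
    α ≤ PA_2 η Δ μ κ ∧ r = MSE_2 η Δ μ κ}

def IsBestResponseN (N : ℕ) (η Δ : ℝ) (μ : Measure ℝ) (QAD : ℝ → ℝ → ℝ)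
    (ν : Measure (Fin (N-1) → ℝ)) : Prop :=
  IsProbabilityMeasure ν ∧ 0 < PA_N N η Δ μ ν ∧
    ∀ ν' : Measure (Fin (N-1) → ℝ), IsProbabilityMeasure ν' → 0 < PA_N N η Δ μ ν' →
      QAD (MSE_N N η Δ μ ν') (PA_N N η Δ μ ν') ≤ QAD (MSE_N N η Δ μ ν) (PA_N N η Δ μ ν)

def IsBestResponse2 (η Δ : ℝ) (μ : Measure ℝ) (QAD : ℝ → ℝ → ℝ) (κ : Measure ℝ) : Prop :=
  IsProbabilityMeasure κ ∧ 0 < PA_2 η Δ μ κ ∧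
    ∀ κ' : Measure ℝ, IsProbabilityMeasure κ' → 0 < PA_2 η Δ μ κ' →
      QAD (MSE_2 η Δ μ κ') (PA_2 η Δ μ κ') ≤ QAD (MSE_2 η Δ μ κ) (PA_2 η Δ μ κ)

/-!
Every N-node strategy can be traded for a 2-node one with the same acceptance probability and
at least the same conditional MSE: for fixed adversarial reports `x`, acceptance and the midpoint
only depend on `S = max x` and `I = min x`, and a single report `t(S, I)` does at least as
well against every honest report in `[-Δ, Δ]` (this is where `η ≥ 2` enters). Conversely a 2-node
strategy is an N-node one in which all adversaries report the same value. Hence both games have the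
same achievable (MSE, PA) pairs up to domination in the MSE, so, `Q_AD` being strictly increasing in
the MSE, the best responses of the two games achieve exactly the same payoff pairs.
-/

open Function

section Maximizers

variable {α β γ : Type*}

theorem setOf_isMaxOn_eq_of_dominated [PartialOrder α] [Preorder γ] {Q : α → β → γ}
    (hQ : ∀ b, StrictMono fun a => Q a b) {V W : Set (α × β)} (hWV : W ⊆ V)
    (hdom : ∀ v ∈ V, ∃ w ∈ W, v.1 ≤ w.1 ∧ w.2 = v.2) :
    {v ∈ V | IsMaxOn (uncurry Q) V v} = {w ∈ W | IsMaxOn (uncurry Q) W w} := by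
  ext v
  constructor
  · rintro ⟨hvV, hvmax⟩
    obtain ⟨w, hwW, hvw, hwv⟩ := hdom v hvV
    have hwv' : w = v := by
      refine Prod.ext ?_ hwv
      have hQwv : Q w.1 w.2 ≤ Q v.1 v.2 := hvmax (hWV hwW)
      rw [hwv] at hQwv
      exact (hvw.eq_or_lt.resolve_right fun hlt => (hQ v.2 hlt).not_ge hQwv).symm
    exact ⟨hwv' ▸ hwW, hvmax.on_subset hWV⟩
  · rintro ⟨hvW, hvmax⟩
    refine ⟨hWV hvW, fun u huV => ?_⟩
    obtain ⟨w, hwW, huw, hwu⟩ := hdom u huV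
    calc uncurry Q u = Q u.1 u.2 := rfl
      _ ≤ Q w.1 w.2 := hwu ▸ (hQ u.2).monotone huw
      _ ≤ uncurry Q v := hvmax hwW

theorem setOf_exists_isMaxOn_eq_image {ι δ : Type*} [Preorder γ] (p : ι → Prop) (f : ι → δ)
    (g : δ → γ) (h : δ → α) :
    {u | ∃ x, (p x ∧ ∀ y, p y → g (f y) ≤ g (f x)) ∧ u = h (f x)} =
      h '' {v ∈ f '' {x | p x} | IsMaxOn g (f '' {x | p x}) v} := by
  ext u
  constructor
  · rintro ⟨x, ⟨hx, hmax⟩, rfl⟩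
    exact ⟨f x, ⟨Set.mem_image_of_mem f hx, Set.forall_mem_image.2 hmax⟩, rfl⟩
  · rintro ⟨_, ⟨⟨x, hx, rfl⟩, hmax⟩, rfl⟩
    exact ⟨x, ⟨hx, fun y hy => hmax (Set.mem_image_of_mem f hy)⟩, rfl⟩

end Maximizers

section Transfer

variable {α β γ : Type*} [MeasurableSpace α] [MeasurableSpace β] [MeasurableSpace γ]

theorem MeasureTheory.Measure.prod_map_right (μ : Measure α) [SFinite μ] (ν : Measure β)
    [SFinite ν] {T : β → γ} (hT : Measurable T) :
    μ.prod (ν.map T) = (μ.prod ν).map (Prod.map id T) := by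
  rw [← Measure.map_prod_map μ ν measurable_id hT, Measure.map_id]

theorem ProbabilityTheory.cond_map {g : α → β} (hg : Measurable g) {s : Set β}
    (hs : MeasurableSet s) (P : Measure α) : (P.map g)[|s] = (P[|g ⁻¹' s]).map g := by
  rw [ProbabilityTheory.cond, ProbabilityTheory.cond, Measure.map_apply hg hs,
    Measure.restrict_map hg hs, Measure.map_smul]

theorem ProbabilityTheory.cond_congr_set {P : Measure α} {s t : Set α} (h : s =ᵐ[P] t) :
    P[|s] = P[|t] := by
  rw [ProbabilityTheory.cond, ProbabilityTheory.cond, measure_congr h, Measure.restrict_congr_set h]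

theorem ae_fst_mem_of_measure_eq_one (μ : Measure α) [IsProbabilityMeasure μ] {s : Set α}
    (hs : MeasurableSet s) (hμ : μ s = 1) (ν : Measure β) [SFinite ν] :
    ∀ᵐ p ∂(μ.prod ν), p.1 ∈ s :=
  Measure.quasiMeasurePreserving_fst.ae (mem_ae_iff.mpr ((prob_compl_eq_zero_iff hs).mpr hμ))

theorem ae_abs_fst_le {Δ : ℝ} (μ : Measure ℝ) [IsProbabilityMeasure μ]
    (hμ : μ (Set.Icc (-Δ) Δ) = 1) (ν : Measure β) [SFinite ν] :
    ∀ᵐ p ∂(μ.prod ν), |p.1| ≤ Δ := by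
  filter_upwards [ae_fst_mem_of_measure_eq_one μ measurableSet_Icc hμ ν] with p hp
  exact abs_le.mpr hp

end Transfer

theorem measurable_mid2 : Measurable mid2 := by
  unfold mid2
  fun_prop

theorem measurableSet_acc2 (η Δ : ℝ) : MeasurableSet (acc2 η Δ) :=
  measurableSet_le (by fun_prop) measurable_const

theorem mid2_eq (p : ℝ × ℝ) : mid2 p = (p.1 + p.2) / 2 := by
  rw [mid2, max_add_min]

theorem mem_acc2_iff {η Δ : ℝ} {p : ℝ × ℝ} : p ∈ acc2 η Δ ↔ |p.1 - p.2| ≤ η * Δ := by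
  rw [← max_sub_min_eq_abs']
  rfl

theorem sq_mid2_le {η Δ : ℝ} {p : ℝ × ℝ} (hp : p ∈ acc2 η Δ) (hp₁ : |p.1| ≤ Δ) :
    mid2 p ^ 2 ≤ ((1 + η) * Δ) ^ 2 := by
  rw [mid2_eq]
  rw [mem_acc2_iff, abs_le] at hp
  rw [abs_le] at hp₁
  apply sq_le_sq' <;> linarith

section NNode

variable {N : ℕ}

theorem measurable_iSup_apply : Measurable fun x : Fin (N - 1) → ℝ => ⨆ i, x i :=
  Measurable.iSup fun i => measurable_pi_apply i

theorem measurable_iInf_apply : Measurable fun x : Fin (N - 1) → ℝ => ⨅ i, x i :=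
  Measurable.iInf fun i => measurable_pi_apply i

theorem measurable_midN : Measurable (midN N) :=
  ((measurable_fst.max (measurable_iSup_apply.comp measurable_snd)).add
    (measurable_fst.min (measurable_iInf_apply.comp measurable_snd))).div_const 2

theorem measurableSet_accN (η Δ : ℝ) : MeasurableSet (accN N η Δ) :=
  measurableSet_le ((measurable_fst.max (measurable_iSup_apply.comp measurable_snd)).sub
    (measurable_fst.min (measurable_iInf_apply.comp measurable_snd))) measurable_const

theorem iInf_le_iSup_apply [Nonempty (Fin (N - 1))] (x : Fin (N - 1) → ℝ) :
    ⨅ i, x i ≤ ⨆ i, x i :=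
  ciInf_le_ciSup (Set.finite_range x).bddBelow (Set.finite_range x).bddAbove

end NNode

section Embedding

variable {N : ℕ} [Nonempty (Fin (N - 1))] {η Δ : ℝ}

theorem preimage_accN_const :
    Prod.map id (const (Fin (N - 1))) ⁻¹' accN N η Δ = acc2 η Δ := by
  ext ⟨n, t⟩
  show max n (⨆ _ : Fin (N - 1), t) - min n (⨅ _ : Fin (N - 1), t) ≤ η * Δ ↔ _
  rw [ciSup_const, ciInf_const]
  rfl

theorem midN_comp_const : midN N ∘ Prod.map id (const (Fin (N - 1))) = mid2 := by
  ext p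
  simp only [comp_apply, midN, mid2, Prod.map_fst, Prod.map_snd, id_eq, const_apply,
    ciSup_const, ciInf_const]

theorem PA_N_map_const (μ : Measure ℝ) [SFinite μ] (κ : Measure ℝ) [SFinite κ] :
    PA_N N η Δ μ (κ.map (const (Fin (N - 1)))) = PA_2 η Δ μ κ := by
  have hg : Measurable (Prod.map id (const (Fin (N - 1))) : ℝ × ℝ → _) := by fun_prop
  rw [PA_N, Measure.prod_map_right μ κ (by fun_prop), Measure.map_apply hg
    (measurableSet_accN η Δ), preimage_accN_const, PA_2]

theorem MSE_N_map_const (μ : Measure ℝ) [SFinite μ] (κ : Measure ℝ) [SFinite κ] :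
    MSE_N N η Δ μ (κ.map (const (Fin (N - 1)))) = MSE_2 η Δ μ κ := by
  have hg : Measurable (Prod.map id (const (Fin (N - 1))) : ℝ × ℝ → _) := by fun_prop
  rw [MSE_N, Measure.prod_map_right μ κ (by fun_prop), cond_map hg (measurableSet_accN η Δ),
    integral_map hg.aemeasurable (measurable_midN.pow_const 2).aestronglyMeasurable,
    preimage_accN_const, MSE_2]
  simp_rw [← comp_apply (f := midN N), midN_comp_const]

end Embedding

/-- A profile whose spread `S - I` exceeds `ηΔ` is rejected whatever the honest report in
`[-Δ, Δ]`, and is replaced by the point `(η + 2)Δ`, too far from `[-Δ, Δ]` to be accepted.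
Otherwise it is replaced by the extreme of larger absolute value, which pulls the midpoint
at least as far from `0`. -/
def collapse (η Δ S I : ℝ) : ℝ :=
  if η * Δ < S - I then (η + 2) * Δ else if 0 ≤ S + I then S else I

section Collapse

variable {η Δ : ℝ}

theorem abs_sub_collapse_le_iff {S I n : ℝ} (hΔ : 0 < Δ) (hη : 2 ≤ η) (hIS : I ≤ S)
    (hn : |n| ≤ Δ) : |n - collapse η Δ S I| ≤ η * Δ ↔ max n S - min n I ≤ η * Δ := by
  have h2Δ : 2 * Δ ≤ η * Δ := by nlinarith
  rw [abs_le] at hn ⊢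
  unfold collapse
  split_ifs <;>
    rcases le_total n S with hnS | hnS <;> rcases le_total n I with hnI | hnI <;>
    simp only [max_eq_left, max_eq_right, min_eq_left, min_eq_right, hnS, hnI] <;>
    constructor <;> intro h <;> first | (constructor <;> linarith) | linarith

theorem sq_midpoint_le_collapse {S I n : ℝ} (hIS : I ≤ S) (hacc : max n S - min n I ≤ η * Δ) :
    ((max n S + min n I) / 2) ^ 2 ≤ ((n + collapse η Δ S I) / 2) ^ 2 := by
  have hspread : ¬ η * Δ < S - I := by
    have := le_max_right n S
    have := min_le_right n I
    linarith
  unfold collapse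
  rw [if_neg hspread]
  split_ifs <;>
    rcases le_total n S with hnS | hnS <;> rcases le_total n I with hnI | hnI <;>
    simp only [max_eq_left, max_eq_right, min_eq_left, min_eq_right, hnS, hnI] <;>
    nlinarith

variable {N : ℕ}

def collapseN (η Δ : ℝ) (x : Fin (N - 1) → ℝ) : ℝ :=
  collapse η Δ (⨆ i, x i) (⨅ i, x i)

theorem measurable_collapseN : Measurable (collapseN (N := N) η Δ) := by
  unfold collapseN collapse
  exact Measurable.ite
    (measurableSet_lt measurable_const (measurable_iSup_apply.sub measurable_iInf_apply))
    measurable_const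
    (Measurable.ite (measurableSet_le measurable_const
      (measurable_iSup_apply.add measurable_iInf_apply)) measurable_iSup_apply
      measurable_iInf_apply)

variable [Nonempty (Fin (N - 1))]

theorem map_collapseN_mem_acc2_iff (hΔ : 0 < Δ) (hη : 2 ≤ η) {p : ℝ × (Fin (N - 1) → ℝ)}
    (hp : |p.1| ≤ Δ) : Prod.map id (collapseN η Δ) p ∈ acc2 η Δ ↔ p ∈ accN N η Δ := by
  rw [mem_acc2_iff]
  exact abs_sub_collapse_le_iff hΔ hη (iInf_le_iSup_apply p.2) hp

variable (μ : Measure ℝ) [IsProbabilityMeasure μ] (ν : Measure (Fin (N - 1) → ℝ)) [SFinite ν]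

theorem preimage_acc2_collapseN_ae_eq (hΔ : 0 < Δ) (hη : 2 ≤ η)
    (hμ : μ (Set.Icc (-Δ) Δ) = 1) :
    Prod.map id (collapseN η Δ) ⁻¹' acc2 η Δ =ᵐ[μ.prod ν] accN N η Δ := by
  filter_upwards [ae_abs_fst_le μ hμ ν] with p hp
  exact propext (map_collapseN_mem_acc2_iff hΔ hη hp)

theorem PA_2_map_collapseN (hΔ : 0 < Δ) (hη : 2 ≤ η) (hμ : μ (Set.Icc (-Δ) Δ) = 1) :
    PA_2 η Δ μ (ν.map (collapseN η Δ)) = PA_N N η Δ μ ν := by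
  have hg : Measurable (Prod.map id (collapseN η Δ) : ℝ × (Fin (N - 1) → ℝ) → ℝ × ℝ) :=
    measurable_id.prodMap measurable_collapseN
  rw [PA_2, Measure.prod_map_right μ ν measurable_collapseN, Measure.map_apply hg
    (measurableSet_acc2 η Δ), measure_congr (preimage_acc2_collapseN_ae_eq μ ν hΔ hη hμ), PA_N]

theorem MSE_N_le_MSE_2_map_collapseN (hΔ : 0 < Δ) (hη : 2 ≤ η)
    (hμ : μ (Set.Icc (-Δ) Δ) = 1) :
    MSE_N N η Δ μ ν ≤ MSE_2 η Δ μ (ν.map (collapseN η Δ)) := by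
  set g : ℝ × (Fin (N - 1) → ℝ) → ℝ × ℝ := Prod.map id (collapseN η Δ)
  have hg : Measurable g := measurable_id.prodMap measurable_collapseN
  have hF := measurableSet_accN (N := N) η Δ
  rw [MSE_2, Measure.prod_map_right μ ν measurable_collapseN, cond_map hg (measurableSet_acc2 η Δ),
    integral_map hg.aemeasurable (measurable_mid2.pow_const 2).aestronglyMeasurable,
    cond_congr_set (preimage_acc2_collapseN_ae_eq μ ν hΔ hη hμ), MSE_N]
  refine integral_mono_of_nonneg (ae_of_all _ fun p => sq_nonneg _) ?_ ?_
  · refine Integrable.of_bound ((measurable_mid2.comp hg).pow_const 2).aestronglyMeasurable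
      (((1 + η) * Δ) ^ 2) ?_
    filter_upwards [ae_cond_mem hF, cond_absolutelyContinuous.ae_le (ae_abs_fst_le μ hμ ν)]
      with p hpF hp
    rw [Real.norm_of_nonneg (sq_nonneg _)]
    exact sq_mid2_le ((map_collapseN_mem_acc2_iff hΔ hη hp).mpr hpF) hp
  · filter_upwards [ae_cond_mem hF] with p hpF
    rw [mid2_eq]
    exact sq_midpoint_le_collapse (iInf_le_iSup_apply p.2) hpF

end Collapse

def payoffsN (N : ℕ) (η Δ : ℝ) (μ : Measure ℝ) : Set (ℝ × ℝ) :=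
  (fun ν => (MSE_N N η Δ μ ν, PA_N N η Δ μ ν)) ''
    {ν | IsProbabilityMeasure ν ∧ 0 < PA_N N η Δ μ ν}

def payoffs2 (η Δ : ℝ) (μ : Measure ℝ) : Set (ℝ × ℝ) :=
  (fun κ => (MSE_2 η Δ μ κ, PA_2 η Δ μ κ)) '' {κ | IsProbabilityMeasure κ ∧ 0 < PA_2 η Δ μ κ}

section Payoffs

variable {N : ℕ} {η Δ : ℝ} (μ : Measure ℝ)

theorem setOf_utility_bestResponseN (QAD QDC : ℝ → ℝ → ℝ) :
    {u | ∃ ν, IsBestResponseN N η Δ μ QAD ν ∧ u = QDC (MSE_N N η Δ μ ν) (PA_N N η Δ μ ν)} =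
      uncurry QDC '' {v ∈ payoffsN N η Δ μ | IsMaxOn (uncurry QAD) (payoffsN N η Δ μ) v} := by
  simpa only [IsBestResponseN, payoffsN, and_imp, and_assoc, uncurry_apply_pair] using
    setOf_exists_isMaxOn_eq_image (fun ν => IsProbabilityMeasure ν ∧ 0 < PA_N N η Δ μ ν)
      (fun ν => (MSE_N N η Δ μ ν, PA_N N η Δ μ ν)) (uncurry QAD) (uncurry QDC)

theorem setOf_utility_bestResponse2 (QAD QDC : ℝ → ℝ → ℝ) :
    {u | ∃ κ, IsBestResponse2 η Δ μ QAD κ ∧ u = QDC (MSE_2 η Δ μ κ) (PA_2 η Δ μ κ)} =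
      uncurry QDC '' {v ∈ payoffs2 η Δ μ | IsMaxOn (uncurry QAD) (payoffs2 η Δ μ) v} := by
  simpa only [IsBestResponse2, payoffs2, and_imp, and_assoc, uncurry_apply_pair] using
    setOf_exists_isMaxOn_eq_image (fun κ => IsProbabilityMeasure κ ∧ 0 < PA_2 η Δ μ κ)
      (fun κ => (MSE_2 η Δ μ κ, PA_2 η Δ μ κ)) (uncurry QAD) (uncurry QDC)

variable [IsProbabilityMeasure μ] [Nonempty (Fin (N - 1))]

theorem payoffs2_subset_payoffsN : payoffs2 η Δ μ ⊆ payoffsN N η Δ μ := by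
  rintro _ ⟨κ, ⟨hκ, hpos⟩, rfl⟩
  refine ⟨κ.map (const (Fin (N - 1))),
    ⟨Measure.isProbabilityMeasure_map (by fun_prop), ?_⟩, ?_⟩
  · rwa [PA_N_map_const]
  · dsimp only
    rw [PA_N_map_const, MSE_N_map_const]

theorem exists_payoffs2_dominating (hΔ : 0 < Δ) (hη : 2 ≤ η) (hμ : μ (Set.Icc (-Δ) Δ) = 1) :
    ∀ v ∈ payoffsN N η Δ μ, ∃ w ∈ payoffs2 η Δ μ, v.1 ≤ w.1 ∧ w.2 = v.2 := by
  rintro _ ⟨ν, ⟨hν, hpos⟩, rfl⟩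
  have hPA := PA_2_map_collapseN μ ν hΔ hη hμ
  exact ⟨_, ⟨ν.map (collapseN η Δ),
    ⟨Measure.isProbabilityMeasure_map measurable_collapseN.aemeasurable, hPA ▸ hpos⟩, rfl⟩,
    MSE_N_le_MSE_2_map_collapseN μ ν hΔ hη hμ, hPA⟩

end Payoffs

theorem stmt15_general {N : ℕ} (hN : 2 ≤ N) {η Δ : ℝ} (hΔ : 0 < Δ) (hη : 2 ≤ η)
    (μ : Measure ℝ) [IsProbabilityMeasure μ] (hμ : μ (Set.Icc (-Δ) Δ) = 1)
    (QAD : ℝ → ℝ → ℝ)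
    (hQ1 : ∀ y : ℝ, StrictMono fun x => QAD x y)
    (QDC : ℝ → ℝ → ℝ) :
    sInf {u : ℝ | ∃ ν : Measure (Fin (N-1) → ℝ), IsBestResponseN N η Δ μ QAD ν ∧
        u = QDC (MSE_N N η Δ μ ν) (PA_N N η Δ μ ν)} =
      sInf {u : ℝ | ∃ κ : Measure ℝ, IsBestResponse2 η Δ μ QAD κ ∧
        u = QDC (MSE_2 η Δ μ κ) (PA_2 η Δ μ κ)} := by
  have : Nonempty (Fin (N - 1)) := ⟨⟨0, by omega⟩⟩
  rw [setOf_utility_bestResponseN, setOf_utility_bestResponse2,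
    setOf_isMaxOn_eq_of_dominated hQ1 (payoffs2_subset_payoffsN μ)
      (exists_payoffs2_dominating μ hΔ hη hμ)]

theorem stmt15 {N : ℕ} (hN : 2 ≤ N) {η Δ : ℝ} (hΔ : 0 < Δ) (hη : 2 ≤ η)
    (μ : Measure ℝ) [IsProbabilityMeasure μ] (hμ : μ (Set.Icc (-Δ) Δ) = 1)
    (QAD : ℝ → ℝ → ℝ)
    (hQ1 : ∀ y : ℝ, StrictMono fun x => QAD x y) (hQ2 : ∀ x : ℝ, StrictMono (QAD x))
    (QDC : ℝ → ℝ → ℝ)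
    (hD1 : ∀ y : ℝ, Antitone fun x => QDC x y) (hD2 : ∀ x : ℝ, Monotone (QDC x))
    (hattN : ∀ a : ℝ, 0 < a → a ≤ 1 → ∃ ν : Measure (Fin (N-1) → ℝ),
      IsProbabilityMeasure ν ∧ a ≤ PA_N N η Δ μ ν ∧ MSE_N N η Δ μ ν = cN N η Δ μ a)
    (hatt2 : ∀ a : ℝ, 0 < a → a ≤ 1 → ∃ κ : Measure ℝ,
      IsProbabilityMeasure κ ∧ a ≤ PA_2 η Δ μ κ ∧ MSE_2 η Δ μ κ = c2 η Δ μ a)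
    (hexN : ∃ ν : Measure (Fin (N-1) → ℝ), IsBestResponseN N η Δ μ QAD ν)
    (hex2 : ∃ κ : Measure ℝ, IsBestResponse2 η Δ μ QAD κ) :
    sInf {u : ℝ | ∃ ν : Measure (Fin (N-1) → ℝ), IsBestResponseN N η Δ μ QAD ν ∧
        u = QDC (MSE_N N η Δ μ ν) (PA_N N η Δ μ ν)} =
      sInf {u : ℝ | ∃ κ : Measure ℝ, IsBestResponse2 η Δ μ QAD κ ∧
        u = QDC (MSE_2 η Δ μ κ) (PA_2 η Δ μ κ)} :=
  stmt15_general hN hΔ hη μ hμ QAD hQ1 QDC
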